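/- The set of expansive measures of a homeomorphism $f$ of a compact metric space $X$ is a $G_{\delta\sigma}$ subset of $\mathcal{M}(X)$ with the weak* topology: it equals $\bigcup_{n=1}^\infty \bigcap_{m=1}^\infty (\mathcal{M}(X) \setminus C(1/n, 1/m))$ where each $C(1/n,1/m)$ is closed. -/

import Mathlib

open MeasureTheory Topology Filter

variable {X : Type*} [MetricSpace X] [CompactSpace X] [MeasurableSpace X] [BorelSpace X]

/-- The dynamical ball `Γ_δ(x)` of a homeomorphism `e`. -/
def gamma (e : X ≃ₜ X) (δ : ℝ) (x : X) : Set X :=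
  {y | ∀ i : ℤ, dist ((e.toEquiv ^ i) x) ((e.toEquiv ^ i) y) ≤ δ}

/-- A measure is expansive if for some `δ > 0` all dynamical `δ`-balls are null. -/
def IsExpansiveMeasure (e : X ≃ₜ X) (μ : Measure X) : Prop :=
  ∃ δ > 0, ∀ x : X, μ (gamma e δ x) = 0

/-- The support of a measure: points all of whose neighborhoods have positive measure. -/
def msupp (μ : Measure X) : Set X := {x | ∀ U ∈ nhds x, 0 < μ U}


/-- The set `C(δ,ε)` of measures giving mass at least `ε` to some `δ`-dynamical ball. -/
def Cset (e : X ≃ₜ X) (δ ε : ℝ) : Set (ProbabilityMeasure X) :=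
  {μ : ProbabilityMeasure X | ∃ x : X, ENNReal.ofReal ε ≤ μ.toMeasure (gamma e δ x)}

set_option linter.unusedSectionVars false in
/-- The iterates of a homeomorphism are continuous. -/
lemma cont_zpow (e : X ≃ₜ X) (i : ℤ) : Continuous fun y => (e.toEquiv ^ i) y := by
  induction i using Int.induction_on with
  | zero => simpa using continuous_id'
  | succ n ih =>
    have h : ∀ y, (e.toEquiv ^ ((n : ℤ) + 1)) y = (e.toEquiv ^ (n : ℤ)) (e y) := by
      intro y; rw [zpow_add_one]; rfl
    simpa only [h] using ih.comp' e.continuous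
  | pred n ih =>
    have h : ∀ y, (e.toEquiv ^ (-(n : ℤ) - 1)) y = (e.toEquiv ^ (-(n : ℤ))) (e.symm y) := by
      intro y; rw [sub_eq_add_neg, zpow_add, zpow_neg_one]
      simp [Equiv.Perm.inv_def]
    simpa only [h] using ih.comp' e.symm.continuous

set_option linter.unusedSectionVars false in
/-- The graph `{(x,y) | y ∈ Γ_δ(x)}` is closed. -/
lemma gammaGraph_closed (e : X ≃ₜ X) (δ : ℝ) :
    IsClosed {p : X × X | ∀ i : ℤ, dist ((e.toEquiv ^ i) p.1) ((e.toEquiv ^ i) p.2) ≤ δ} := by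
  have : {p : X × X | ∀ i : ℤ, dist ((e.toEquiv ^ i) p.1) ((e.toEquiv ^ i) p.2) ≤ δ}
      = ⋂ i : ℤ, {p : X × X | dist ((e.toEquiv ^ i) p.1) ((e.toEquiv ^ i) p.2) ≤ δ} := by
    ext p; simp [Set.mem_iInter]
  rw [this]
  refine isClosed_iInter fun i => isClosed_le ?_ continuous_const
  exact ((cont_zpow e i).comp continuous_fst).dist ((cont_zpow e i).comp continuous_snd)

set_option linter.unusedSectionVars false in
lemma gamma_closed (e : X ≃ₜ X) (δ : ℝ) (x : X) : IsClosed (gamma e δ x) :=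
  (gammaGraph_closed e δ).preimage (Continuous.prodMk_right x)

set_option linter.unusedSectionVars false in
/-- Upper semicontinuity of the fibers `x ↦ Γ_δ(x)`. -/
lemma gamma_usc (e : X ≃ₜ X) (δ : ℝ) (x : X) {U : Set X} (hU : IsOpen U)
    (h : gamma e δ x ⊆ U) : ∀ᶠ x' in 𝓝 x, gamma e δ x' ⊆ U := by
  set G := {p : X × X | ∀ i : ℤ, dist ((e.toEquiv ^ i) p.1) ((e.toEquiv ^ i) p.2) ≤ δ}
  set S := Prod.fst '' (G ∩ Set.univ ×ˢ Uᶜ) with hS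
  have hGc : IsCompact (G ∩ Set.univ ×ˢ Uᶜ) :=
    ((gammaGraph_closed e δ).inter (isClosed_univ.prod hU.isClosed_compl)).isCompact
  have hSclosed : IsClosed S := (hGc.image continuous_fst).isClosed
  have hxS : x ∉ S := by
    rintro ⟨⟨a, b⟩, ⟨hG, -, hb⟩, rfl⟩
    exact hb (h hG)
  filter_upwards [hSclosed.isOpen_compl.mem_nhds hxS] with x' hx' y hy
  by_contra hyU
  exact hx' ⟨(x', y), ⟨hy, Set.mem_univ _, hyU⟩, rfl⟩

/-- `C(δ,ε)` is closed in the weak* topology. -/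
lemma Cset_closed (e : X ≃ₜ X) (δ ε : ℝ) : IsClosed (Cset e δ ε) := by
  refine IsSeqClosed.isClosed ?_
  intro μs μ hmem hlim
  choose xs hxs using hmem
  obtain ⟨x, -, φ, hφ, hx⟩ := isCompact_univ.tendsto_subseq (x := xs) (fun n => Set.mem_univ _)
  have hμφ : Tendsto (μs ∘ φ) atTop (𝓝 μ) := hlim.comp hφ.tendsto_atTop
  have key : ∀ r > (0:ℝ), ENNReal.ofReal ε ≤ μ.toMeasure (Metric.cthickening r (gamma e δ x)) := by
    intro r hr
    set U := Metric.thickening r (gamma e δ x)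
    have hsub : gamma e δ x ⊆ U := Metric.self_subset_thickening hr _
    have husc := gamma_usc e δ x Metric.isOpen_thickening hsub
    have hev : ∀ᶠ k in atTop,
        ENNReal.ofReal ε ≤ ((μs ∘ φ) k).toMeasure (Metric.cthickening r (gamma e δ x)) := by
      filter_upwards [hx.eventually husc] with k hk
      calc ENNReal.ofReal ε ≤ (μs (φ k)).toMeasure (gamma e δ (xs (φ k))) := hxs (φ k)
        _ ≤ (μs (φ k)).toMeasure U := measure_mono hk
        _ ≤ _ := measure_mono (Metric.thickening_subset_cthickening _ _)
    calc ENNReal.ofReal ε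
        ≤ atTop.limsup (fun k => ((μs ∘ φ) k).toMeasure (Metric.cthickening r (gamma e δ x))) :=
          le_limsup_of_frequently_le' hev.frequently
      _ ≤ μ.toMeasure (Metric.cthickening r (gamma e δ x)) :=
          ProbabilityMeasure.limsup_measure_closed_le_of_tendsto hμφ Metric.isClosed_cthickening
  have htend : Tendsto (fun r => μ.toMeasure (Metric.cthickening r (gamma e δ x))) (𝓝[>] 0)
      (𝓝 (μ.toMeasure (gamma e δ x))) := by
    refine (tendsto_measure_cthickening_of_isClosed ⟨1, one_pos, ?_⟩
      (gamma_closed e δ x)).mono_left nhdsWithin_le_nhds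
    exact (measure_lt_top _ _).ne
  refine ⟨x, ge_of_tendsto htend ?_⟩
  filter_upwards [self_mem_nhdsWithin] with r hr using key r hr

set_option linter.unusedSectionVars false in
lemma gamma_mono (e : X ≃ₜ X) {δ δ' : ℝ} (h : δ ≤ δ') (x : X) :
    gamma e δ x ⊆ gamma e δ' x := fun _ hy i => (hy i).trans h

/-- The set of expansive measures is a `G_{δσ}` subset of `𝓜(X)`: it equals
`⋃_n ⋂_m (𝓜(X) \ C(1/n, 1/m))` with each `C(1/n, 1/m)` closed. -/
theorem expansive_Gdeltasigma (e : X ≃ₜ X) :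
    (∀ n m : ℕ, IsClosed (Cset e (1 / (n + 1)) (1 / (m + 1)))) ∧
    {μ : ProbabilityMeasure X | IsExpansiveMeasure e μ.toMeasure} =
      ⋃ n : ℕ, ⋂ m : ℕ, (Cset e (1 / (n + 1)) (1 / (m + 1)))ᶜ := by
  refine ⟨fun n m => Cset_closed e _ _, ?_⟩
  ext μ
  simp only [Set.mem_setOf_eq, Set.mem_iUnion, Set.mem_iInter, Set.mem_compl_iff, Cset,
    Set.mem_setOf_eq, not_exists, not_le]
  constructor
  · rintro ⟨δ, hδ, h⟩
    obtain ⟨n, hn⟩ := exists_nat_gt (1 / δ)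
    have hδ' : (1 : ℝ) / (n + 1) ≤ δ := by
      rw [div_le_iff₀ (by positivity)]
      rw [div_lt_iff₀ hδ] at hn
      nlinarith
    refine ⟨n, fun m x => ?_⟩
    have : μ.toMeasure (gamma e (1 / (n + 1)) x) = 0 :=
      le_antisymm ((measure_mono (gamma_mono e hδ' x)).trans (h x).le) zero_le
    rw [this]
    exact ENNReal.ofReal_pos.mpr (by positivity)
  · rintro ⟨n, h⟩
    refine ⟨1 / (n + 1), by positivity, fun x => ?_⟩
    by_contra hne
    obtain ⟨m, hm⟩ := ENNReal.exists_inv_nat_lt hne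
    refine absurd (h m x) (not_lt.mpr ?_)
    refine le_trans ?_ hm.le
    have : ENNReal.ofReal (1 / ((m : ℝ) + 1)) = (((m : ℕ) + 1 : ℕ) : ENNReal)⁻¹ := by
      rw [one_div, ENNReal.ofReal_inv_of_pos (by positivity)]
      congr 1
      rw [ENNReal.ofReal_add (by positivity) zero_le_one]
      simp
    rw [this]
    exact ENNReal.inv_le_inv' (by exact_mod_cast Nat.le_succ m)
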